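/- arXiv:1810.13264 — 6 statements merged into one kernel-verified Lean document; each statement's English description precedes it below -/
import Mathlib

section
/- Let $\{\gamma_j\}_{j\geq 1}$ be a non-negative real sequence with $\sum_{j\geq 1} \gamma_j^{p_2} < \infty$ for some $p_2 > 0$. Then for any $M > 0$ and any $p_1 < 1$, the sum over all finite subsets $\mathfrak{u} \subset \mathbb{N}$ of $|\mathfrak{u}|^{p_1|\mathfrak{u}|} M^{|\mathfrak{u}|} \prod_{j\in\mathfrak{u}} \gamma_j^{p_2}$ is finite. -/
/-!
Write `g j = γ j ^ p₂` and fix `S > ∑ j, g j`. Expanding `∏ j, (1 + t * g j) ≤ exp (t * S)` shows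
that the subsets of size `ℓ` contribute at most `exp (t * S) / t ^ ℓ` to `∑ u, ∏ j ∈ u, g j`; with
`t = ℓ / S` this is `(e * S / ℓ) ^ ℓ`, which plays the role of `S ^ ℓ / ℓ!`. So the size-`ℓ` part of
the sum is at most `(e * M * S * ℓ ^ (p₁ - 1)) ^ ℓ`, summable in `ℓ` by the root test since `p₁ < 1`.
-/

open Finset Filter Topology

theorem summable_of_sum_fiberwise_le {α β : Type*} [DecidableEq β] {f : α → ℝ} (hf : 0 ≤ f)
    (g : α → β) {c : β → ℝ} (hc : Summable c)
    (h : ∀ (s : Finset α) (b : β), ∑ x ∈ s with g x = b, f x ≤ c b) : Summable f := by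
  have hc0 : 0 ≤ c := fun b => by simpa using h ∅ b
  refine summable_of_sum_le (c := ∑' b, c b) hf fun s => ?_
  calc ∑ x ∈ s, f x = ∑ b ∈ s.image g, ∑ x ∈ s with g x = b, f x :=
        (sum_fiberwise_of_maps_to (fun x hx => mem_image_of_mem g hx) f).symm
    _ ≤ ∑ b ∈ s.image g, c b := sum_le_sum fun b _ => h s b
    _ ≤ ∑' b, c b := hc.sum_le_tsum _ fun b _ => hc0 b

theorem summable_pow_self_of_tendsto_zero {q : ℕ → ℝ} (hq : Tendsto q atTop (𝓝 0)) :
    Summable fun n => q n ^ n := by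
  refine summable_geometric_two.of_norm_bounded_eventually_nat ?_
  filter_upwards [hq.norm.eventually (gt_mem_nhds (by norm_num : ‖(0 : ℝ)‖ < 1 / 2))] with n hn
  rw [norm_pow]
  exact pow_le_pow_left₀ (norm_nonneg _) hn.le n

theorem summable_natCast_rpow_mul_div_pow {p : ℝ} (hp : p < 1) (C : ℝ) :
    Summable fun ℓ : ℕ => (ℓ : ℝ) ^ (p * ℓ) * (C / ℓ) ^ ℓ := by
  have hrpow : Tendsto (fun ℓ : ℕ => (ℓ : ℝ) ^ (p - 1)) atTop (𝓝 0) := by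
    have := tendsto_rpow_neg_atTop (sub_pos.2 hp)
    rw [neg_sub] at this
    exact this.comp tendsto_natCast_atTop_atTop
  have hbase : Tendsto (fun ℓ : ℕ => (ℓ : ℝ) ^ p * (C / ℓ)) atTop (𝓝 0) := by
    have hC := hrpow.const_mul C
    rw [mul_zero] at hC
    refine hC.congr' ?_
    filter_upwards [eventually_ne_atTop 0] with ℓ hℓ
    rw [Real.rpow_sub_one (Nat.cast_ne_zero.2 hℓ)]
    ring
  refine (summable_pow_self_of_tendsto_zero hbase).congr fun ℓ => ?_
  rw [mul_pow, Real.rpow_mul_natCast (Nat.cast_nonneg ℓ)]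

theorem Finset.sum_powerset_pow_card_mul_prod_le_exp {ι : Type*} (s : Finset ι) {g : ι → ℝ}
    (hg : ∀ j ∈ s, 0 ≤ g j) {t : ℝ} (ht : 0 ≤ t) :
    ∑ u ∈ s.powerset, t ^ u.card * ∏ j ∈ u, g j ≤ Real.exp (t * ∑ j ∈ s, g j) :=
  calc ∑ u ∈ s.powerset, t ^ u.card * ∏ j ∈ u, g j = ∏ j ∈ s, (1 + t * g j) := by
        simp_rw [prod_one_add, prod_mul_distrib, prod_const]
    _ ≤ ∏ j ∈ s, Real.exp (t * g j) :=
        prod_le_prod (fun j hj => by nlinarith [hg j hj]) fun j _ => by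
          linarith [Real.add_one_le_exp (t * g j)]
    _ = Real.exp (t * ∑ j ∈ s, g j) := by rw [mul_sum, Real.exp_sum]

theorem sum_prod_le_of_card_eq {ι : Type*} {g : ι → ℝ} (hg : 0 ≤ g) (hsum : Summable g)
    {S : ℝ} (hS : ∑' j, g j ≤ S) (hS0 : 0 < S) {U : Finset (Finset ι)} {ℓ : ℕ}
    (hU : ∀ u ∈ U, u.card = ℓ) :
    ∑ u ∈ U, ∏ j ∈ u, g j ≤ (Real.exp 1 * S / ℓ) ^ ℓ := by
  classical
  set t : ℝ := ℓ / S
  have ht : 0 ≤ t := by positivity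
  have htℓ : 0 < t ^ ℓ := by
    rcases ℓ.eq_zero_or_pos with rfl | hℓ
    · simp
    · exact pow_pos (div_pos (Nat.cast_pos.2 hℓ) hS0) ℓ
  have key : t ^ ℓ * ∑ u ∈ U, ∏ j ∈ u, g j ≤ Real.exp 1 ^ ℓ :=
    calc t ^ ℓ * ∑ u ∈ U, ∏ j ∈ u, g j = ∑ u ∈ U, t ^ u.card * ∏ j ∈ u, g j := by
          rw [mul_sum]; exact sum_congr rfl fun u hu => by rw [hU u hu]
      _ ≤ ∑ u ∈ (U.sup id).powerset, t ^ u.card * ∏ j ∈ u, g j :=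
          sum_le_sum_of_subset_of_nonneg (fun u hu => mem_powerset.2 (le_sup (f := id) hu))
            fun u _ _ => mul_nonneg (pow_nonneg ht _) (prod_nonneg fun j _ => hg j)
      _ ≤ Real.exp (t * ∑ j ∈ U.sup id, g j) :=
          sum_powerset_pow_card_mul_prod_le_exp _ (fun j _ => hg j) ht
      _ ≤ Real.exp (t * S) := by
          gcongr
          exact (hsum.sum_le_tsum _ fun j _ => hg j).trans hS
      _ = Real.exp 1 ^ ℓ := by rw [div_mul_cancel₀ _ hS0.ne', ← Real.exp_nat_mul, mul_one]
  rw [← div_div_eq_mul_div, div_pow, le_div_iff₀' htℓ]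
  exact key

theorem mdm_sum_over_finite_subsets_finite_general
    (γ : ℕ → ℝ) (hγ : ∀ j, 0 ≤ γ j) (p₁ p₂ M : ℝ)
    (hsum : Summable (fun j => γ j ^ p₂))
    (hM : 0 < M) (hp₁ : p₁ < 1) :
    Summable (fun u : Finset ℕ =>
      (u.card : ℝ) ^ (p₁ * u.card) * M ^ u.card * ∏ j ∈ u, γ j ^ p₂) := by
  have hg : 0 ≤ fun j => γ j ^ p₂ := fun j => Real.rpow_nonneg (hγ j) p₂
  set S := ∑' j, γ j ^ p₂ + 1
  have hS0 : 0 < S := add_pos_of_nonneg_of_pos (tsum_nonneg hg) one_pos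
  refine summable_of_sum_fiberwise_le (fun u => mul_nonneg (by positivity) (prod_nonneg
    fun j _ => hg j)) card (summable_natCast_rpow_mul_div_pow hp₁ (M * Real.exp 1 * S))
    fun U ℓ => ?_
  calc ∑ u ∈ U with u.card = ℓ, (u.card : ℝ) ^ (p₁ * u.card) * M ^ u.card * ∏ j ∈ u, γ j ^ p₂
      = (ℓ : ℝ) ^ (p₁ * ℓ) * M ^ ℓ * ∑ u ∈ U with u.card = ℓ, ∏ j ∈ u, γ j ^ p₂ := by
        rw [mul_sum]
        exact sum_congr rfl fun u hu => by rw [(mem_filter.1 hu).2]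
    _ ≤ (ℓ : ℝ) ^ (p₁ * ℓ) * M ^ ℓ * (Real.exp 1 * S / ℓ) ^ ℓ := by
        gcongr
        exact sum_prod_le_of_card_eq hg hsum (le_add_of_nonneg_right zero_le_one) hS0
          fun u hu => (mem_filter.1 hu).2
    _ = (ℓ : ℝ) ^ (p₁ * ℓ) * (M * Real.exp 1 * S / ℓ) ^ ℓ := by
        rw [mul_assoc, ← mul_pow, mul_div_assoc, mul_div_assoc, mul_assoc]

/-- Lemma 3.1 (modified from Kuo et al.): if `{γ_j}` is a non-negative sequence with
`∑_j γ_j^{p₂} < ∞` for some `p₂ > 0`, then for any `M > 0` and `p₁ < 1` the sum over all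
finite subsets `𝔲 ⊂ ℕ` of `|𝔲|^{p₁|𝔲|} M^{|𝔲|} ∏_{j∈𝔲} γ_j^{p₂}` is finite. -/
theorem mdm_sum_over_finite_subsets_finite
    (γ : ℕ → ℝ) (hγ : ∀ j, 0 ≤ γ j) (p₁ p₂ M : ℝ)
    (hp₂ : 0 < p₂) (hsum : Summable (fun j => γ j ^ p₂))
    (hM : 0 < M) (hp₁ : p₁ < 1) :
    Summable (fun u : Finset ℕ =>
      (u.card : ℝ) ^ (p₁ * u.card) * M ^ u.card * ∏ j ∈ u, γ j ^ p₂) :=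
  mdm_sum_over_finite_subsets_finite_general γ hγ p₁ p₂ M hsum hM hp₁
end

section
/- Under the assumptions of the active-set construction (positive reals $A_\mathfrak{u}$ indexed by finite subsets of $\mathbb{N}$, $S = \sum_{|\mathfrak{u}|<\infty} A_\mathfrak{u}^{q/\varsigma} < \infty$, $q\geq 1$, $\varsigma>1$), the cardinality of the active set $\mathfrak{U}(\epsilon) = \{\mathfrak{u} : A_\mathfrak{u}^{q(1-1/\varsigma)} > (\epsilon/2)^q/S\}$ satisfies $|\mathfrak{U}(\epsilon)| < (2/\epsilon)^{q/(\varsigma-1)}\, S^{\varsigma/(\varsigma-1)}$. -/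
/-!
Write `S = ∑' 𝔲, A_𝔲^{q/ς}`. Since `A^{q(1-1/ς)} = (A^{q/ς})^{ς-1}`, the active set is the set where
the summable family `A_𝔲^{q/ς}` exceeds `c = ((ε/2)^q / S)^{1/(ς-1)} > 0`. Such a superlevel set of a
summable family is finite, and each of its members contributes more than `c` to `S`, so
`|𝔘(ε)| · c < S`. Finally `S / c` is exactly `(2/ε)^{q/(ς-1)} S^{ς/(ς-1)}`.
-/

namespace Summable

variable {ι : Type*} {f : ι → ℝ}

theorem finite_setOf_lt (hf : Summable f) {c : ℝ} (hc : 0 < c) : {i | c < f i}.Finite :=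
  (Filter.eventually_cofinite.mp (hf.tendsto_cofinite_zero.eventually (gt_mem_nhds hc))).subset
    fun _ hi => not_lt.mpr hi.le

theorem ncard_setOf_lt_mul_lt_tsum (hf : Summable f) (hf0 : ∀ i, 0 ≤ f i)
    (hpos : 0 < ∑' i, f i) {c : ℝ} (hc : 0 < c) :
    ({i | c < f i}.ncard : ℝ) * c < ∑' i, f i := by
  have hfin := hf.finite_setOf_lt hc
  rcases Set.eq_empty_or_nonempty {i | c < f i} with hempty | hne
  · simpa [hempty] using hpos
  calc ({i | c < f i}.ncard : ℝ) * c = ∑ _i ∈ hfin.toFinset, c := by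
        rw [Finset.sum_const, nsmul_eq_mul, Set.ncard_eq_toFinset_card _ hfin]
    _ < ∑ i ∈ hfin.toFinset, f i :=
        Finset.sum_lt_sum_of_nonempty (hfin.toFinset_nonempty.mpr hne)
          fun i hi => hfin.mem_toFinset.mp hi
    _ ≤ ∑' i, f i := hf.sum_le_tsum _ fun i _ => hf0 i

end Summable

theorem Real.lt_rpow_mul_one_sub_inv_iff {a t : ℝ} (ha : 0 < a) (ht : 0 ≤ t) (q : ℝ) {ς : ℝ}
    (hς : 1 < ς) : t < a ^ (q * (1 - 1 / ς)) ↔ t ^ (ς - 1)⁻¹ < a ^ (q / ς) := by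
  have hsplit : a ^ (q * (1 - 1 / ς)) = (a ^ (q / ς)) ^ (ς - 1) := by
    rw [← Real.rpow_mul ha.le]
    congr 1
    field_simp
  rw [hsplit, Real.rpow_inv_lt_iff_of_pos ht (by positivity) (by linarith)]

theorem Real.inv_rpow_mul_rpow_mul_rpow_inv_eq {b S : ℝ} (hb : 0 < b) (hS : 0 < S) (q : ℝ)
    {ς : ℝ} (hς : ς ≠ 1) :
    b⁻¹ ^ (q / (ς - 1)) * S ^ (ς / (ς - 1)) * (b ^ q / S) ^ (ς - 1)⁻¹ = S := by
  rw [Real.rpow_def_of_pos (inv_pos.mpr hb), Real.rpow_def_of_pos hS,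
    Real.rpow_def_of_pos (by positivity), ← Real.exp_add, ← Real.exp_add,
    Real.log_div (by positivity) hS.ne', Real.log_rpow hb, Real.log_inv]
  conv_rhs => rw [← Real.exp_log hS]
  congr 1
  field_simp
  ring

theorem active_set_cardinality_bound_general
    (A : Finset ℕ → ℝ) (hA : ∀ u, 0 < A u)
    (q ς ε : ℝ) (hς : 1 < ς) (hε : 0 < ε)
    (hS : Summable (fun u : Finset ℕ => A u ^ (q / ς))) :
    {u : Finset ℕ |
        A u ^ (q * (1 - 1/ς)) > (ε/2) ^ q / (∑' v : Finset ℕ, A v ^ (q/ς))}.Finite ∧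
      (({u : Finset ℕ |
          A u ^ (q * (1 - 1/ς)) > (ε/2) ^ q / (∑' v : Finset ℕ, A v ^ (q/ς))}.ncard : ℝ)
        < (2/ε) ^ (q/(ς-1)) * (∑' v : Finset ℕ, A v ^ (q/ς)) ^ (ς/(ς-1))) := by
  set S := ∑' v : Finset ℕ, A v ^ (q / ς)
  have hApow : ∀ u, 0 < A u ^ (q / ς) := fun u => Real.rpow_pos_of_pos (hA u) _
  have hSpos : 0 < S := hS.tsum_pos (fun u => (hApow u).le) ∅ (hApow ∅)
  set c := ((ε / 2) ^ q / S) ^ (ς - 1)⁻¹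
  have hc : 0 < c := by positivity
  have hset : {u : Finset ℕ | A u ^ (q * (1 - 1/ς)) > (ε/2) ^ q / S}
      = {u | c < A u ^ (q / ς)} := by
    ext u
    exact Real.lt_rpow_mul_one_sub_inv_iff (hA u) (by positivity) q hς
  have hcS : (2 / ε) ^ (q / (ς - 1)) * S ^ (ς / (ς - 1)) * c = S := by
    rw [← inv_div]
    exact Real.inv_rpow_mul_rpow_mul_rpow_inv_eq (by positivity) hSpos q hς.ne'
  rw [hset]
  refine ⟨hS.finite_setOf_lt hc, lt_of_mul_lt_mul_right ?_ hc.le⟩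
  rw [hcS]
  exact hS.ncard_setOf_lt_mul_lt_tsum (fun u => (hApow u).le) hSpos hc

/-- Cardinality of the MDM active set: given positive reals `A_𝔲` indexed by finite
subsets of `ℕ` with `S = ∑_𝔲 A_𝔲^{q/ς} < ∞`, `q ≥ 1`, `ς > 1`, the active set
`𝔘(ε) = {𝔲 : A_𝔲^{q(1-1/ς)} > (ε/2)^q / S}` is finite and its cardinality is strictly
less than `(2/ε)^{q/(ς-1)} S^{ς/(ς-1)}`. -/
theorem active_set_cardinality_bound
    (A : Finset ℕ → ℝ) (hA : ∀ u, 0 < A u)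
    (q ς ε : ℝ) (hq : 1 ≤ q) (hς : 1 < ς) (hε : 0 < ε)
    (hS : Summable (fun u : Finset ℕ => A u ^ (q / ς))) :
    {u : Finset ℕ |
        A u ^ (q * (1 - 1/ς)) > (ε/2) ^ q / (∑' v : Finset ℕ, A v ^ (q/ς))}.Finite ∧
      (({u : Finset ℕ |
          A u ^ (q * (1 - 1/ς)) > (ε/2) ^ q / (∑' v : Finset ℕ, A v ^ (q/ς))}.ncard : ℝ)
        < (2/ε) ^ (q/(ς-1)) * (∑' v : Finset ℕ, A v ^ (q/ς)) ^ (ς/(ς-1))) :=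
  active_set_cardinality_bound_general A hA q ς ε hς hε hS
end

section
/- Let $\gamma_j \leq \eta j^{-\beta}$ for constants $\eta > 0$, $\beta > 0$, let $M > 0$ and set $\gamma_\mathfrak{u} = \prod_{j\in\mathfrak{u}}\gamma_j$, $M_\mathfrak{u} = M^{|\mathfrak{u}|}$. If a finite subset $\mathfrak{u}\subset\mathbb{N}$ of cardinality $n$ satisfies $(\gamma_\mathfrak{u} M_\mathfrak{u})^{c} > \varepsilon_0$ for some $c > 0$ and $\varepsilon_0 > 0$, then $n!/(\eta M)^{n/\beta} < \varepsilon_0^{-1/(\beta c)}$; in particular, using Stirling's bound $(n/e)^n \leq n!$, one obtains $(n/(e(\eta M)^{1/\beta}))^n < \varepsilon_0^{-1/(\beta c)}$. -/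
/-!
The `n` indices of `u` are distinct positive integers, so `∏_{j ∈ u} j ≥ n!` and hence
`γ_u M_u ≤ (ηM)^n (n!)^{-β}`. Taking `1/(βc)`-th powers in `ε₀ < (γ_u M_u)^c` and inverting gives
the hfactorial bound; the second follows from it and `(n/e)^n ≤ n!`, i.e. the term `n^n/n!` of the
series of `e^n` is at most `e^n`.
-/

open scoped Nat

open Finset Real

theorem Finset.factorial_card_le_prod_id {s : Finset ℕ} (hs : 0 ∉ s) : (#s)! ≤ ∏ j ∈ s, j := by
  induction s using Finset.induction_on_max with
  | empty => simp
  | insert a s hlt ih =>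
    have ha : a ∉ s := fun h => lt_irrefl a (hlt a h)
    have ha0 : a ≠ 0 := ne_of_mem_of_not_mem (mem_insert_self a s) hs
    have hcard : #s + 1 ≤ a := by
      have hsub : s ⊆ Ico 1 a := fun x hx =>
        mem_Ico.2 ⟨Nat.one_le_iff_ne_zero.2 (ne_of_mem_of_not_mem (mem_insert_of_mem hx) hs),
          hlt x hx⟩
      have := card_le_card hsub
      rw [Nat.card_Ico] at this
      omega
    rw [card_insert_of_notMem ha, prod_insert ha, Nat.factorial_succ]
    exact Nat.mul_le_mul hcard (ih fun h => hs (mem_insert_of_mem h))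

theorem prod_le_pow_card_mul_factorial_rpow_neg {γ : ℕ → ℝ} {η β : ℝ} {s : Finset ℕ}
    (hs : 0 ∉ s) (hη : 0 ≤ η) (hβ : 0 ≤ β) (hγ0 : ∀ j ∈ s, 0 ≤ γ j)
    (hγ : ∀ j ∈ s, γ j ≤ η * (j : ℝ) ^ (-β)) :
    ∏ j ∈ s, γ j ≤ η ^ #s * ((#s)! : ℝ) ^ (-β) := by
  have hpos : ∀ j ∈ s, (0 : ℝ) < j := fun j hj =>
    Nat.cast_pos.2 (Nat.pos_of_ne_zero (ne_of_mem_of_not_mem hj hs))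
  have hfac : ((#s)! : ℝ) ≤ ∏ j ∈ s, (j : ℝ) := by
    rw [← Nat.cast_prod]
    exact_mod_cast Finset.factorial_card_le_prod_id hs
  calc ∏ j ∈ s, γ j ≤ ∏ j ∈ s, η * (j : ℝ) ^ (-β) := prod_le_prod hγ0 hγ
    _ = η ^ #s * (∏ j ∈ s, (j : ℝ)) ^ (-β) := by
      rw [prod_mul_distrib, prod_const, finsetProd_rpow _ _ fun j hj => (hpos j hj).le]
    _ ≤ η ^ #s * ((#s)! : ℝ) ^ (-β) :=
      mul_le_mul_of_nonneg_left
        (rpow_le_rpow_of_nonpos (by positivity) hfac (neg_nonpos.2 hβ)) (by positivity)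

theorem div_rpow_one_div_lt_rpow_neg_of_lt {a x β c ε : ℝ} (ha : 0 < a) (hx : 0 < x)
    (hβ : 0 < β) (hc : 0 < c) (hε : 0 < ε) (h : ε < (a * x ^ (-β)) ^ c) :
    x / a ^ (1 / β) < ε ^ (-(1 / (β * c))) := by
  have hroot : ε ^ (1 / (β * c)) < a ^ (1 / β) / x := by
    have hc' : c * (1 / (β * c)) = 1 / β := by field_simp
    have hβ' : -β * (1 / β) = -1 := by field_simp
    calc ε ^ (1 / (β * c)) < ((a * x ^ (-β)) ^ c) ^ (1 / (β * c)) :=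
          rpow_lt_rpow hε.le h (by positivity)
      _ = a ^ (1 / β) / x := by
        rw [← rpow_mul (by positivity), hc', mul_rpow ha.le (by positivity), ← rpow_mul hx.le,
          hβ', rpow_neg_one, ← div_eq_mul_inv]
  rw [rpow_neg hε.le, ← inv_div (a ^ (1 / β)) x]
  exact inv_strictAnti₀ (rpow_pos_of_pos hε _) hroot

theorem div_exp_one_pow_le_factorial (n : ℕ) : ((n : ℝ) / exp 1) ^ n ≤ n ! := by
  rw [div_pow, exp_one_pow, div_le_iff₀ (exp_pos _), mul_comm, ← div_le_iff₀ (by positivity)]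
  exact pow_div_factorial_le_exp _ (Nat.cast_nonneg n) n

theorem div_exp_one_mul_pow_le_factorial_div_pow (n : ℕ) {b : ℝ} (hb : 0 < b) :
    ((n : ℝ) / (exp 1 * b)) ^ n ≤ (n ! : ℝ) / b ^ n := by
  rw [← div_div, div_pow]
  gcongr
  exact div_exp_one_pow_le_factorial n

/-- Key estimate for the dimension of the MDM active set: if `γ_j ≤ η j^{-β}` for `j ≥ 1`,
`M > 0`, `γ_𝔲 = ∏_{j∈𝔲} γ_j`, `M_𝔲 = M^{|𝔲|}`, and a finite subset `𝔲 ⊂ {1,2,…}` of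
cardinality `n` satisfies `(γ_𝔲 M_𝔲)^c > ε₀`, then `n!/(ηM)^{n/β} < ε₀^{-1/(βc)}`, and
by Stirling's bound `(n/e)ⁿ ≤ n!` also `(n/(e (ηM)^{1/β}))ⁿ < ε₀^{-1/(βc)}`. -/
theorem active_set_cardinality_key_estimate
    (γ : ℕ → ℝ) (η β M c ε₀ : ℝ)
    (hη : 0 < η) (hβ : 0 < β) (hM : 0 < M) (hc : 0 < c) (hε₀ : 0 < ε₀)
    (hγ0 : ∀ j, 0 ≤ γ j)
    (hγ : ∀ j, 1 ≤ j → γ j ≤ η * (j : ℝ) ^ (-β))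
    (u : Finset ℕ) (hu : 0 ∉ u)
    (hbig : ((∏ j ∈ u, γ j) * M ^ u.card) ^ c > ε₀) :
    (u.card.factorial : ℝ) / (η * M) ^ ((u.card : ℝ) / β) < ε₀ ^ (-(1/(β * c))) ∧
      ((u.card : ℝ) / (Real.exp 1 * (η * M) ^ (1/β))) ^ u.card < ε₀ ^ (-(1/(β * c))) := by
  have hηM : 0 < η * M := mul_pos hη hM
  have hγu : ∏ j ∈ u, γ j ≤ η ^ #u * ((#u)! : ℝ) ^ (-β) :=
    prod_le_pow_card_mul_factorial_rpow_neg hu hη.le hβ.le (fun j _ => hγ0 j) fun j hj =>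
      hγ j (Nat.one_le_iff_ne_zero.2 (ne_of_mem_of_not_mem hj hu))
  have hbound : ε₀ < ((η * M) ^ #u * ((#u)! : ℝ) ^ (-β)) ^ c := by
    refine hbig.trans_le (rpow_le_rpow (mul_nonneg (prod_nonneg fun j _ => hγ0 j) (by positivity))
      ?_ hc.le)
    rw [mul_pow, mul_right_comm]
    gcongr
  have hfactorial : ((#u)! : ℝ) / (η * M) ^ ((#u : ℝ) / β) < ε₀ ^ (-(1 / (β * c))) := by
    have := div_rpow_one_div_lt_rpow_neg_of_lt (pow_pos hηM _) (by positivity) hβ hc hε₀ hbound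
    rwa [← rpow_natCast_mul hηM.le, mul_one_div] at this
  refine ⟨hfactorial, lt_of_le_of_lt ?_ hfactorial⟩
  calc ((#u : ℝ) / (exp 1 * (η * M) ^ (1 / β))) ^ #u
      ≤ ((#u)! : ℝ) / ((η * M) ^ (1 / β)) ^ #u :=
        div_exp_one_mul_pow_le_factorial_div_pow _ (rpow_pos_of_pos hηM _)
    _ = ((#u)! : ℝ) / (η * M) ^ ((#u : ℝ) / β) := by
        rw [← rpow_mul_natCast hηM.le, one_div_mul_eq_div]
end

section
/- For the one-dimensional anchored kernel $K_\alpha$ of smoothness $\alpha \geq 1$ on $[-1/2,1/2]$, one has $\int_{-1/2}^{1/2} K_\alpha(y,y)^{1/2}\,dy \leq \left(I_0(1) - 1 + \frac{1}{((\alpha-1)!)^2(2\alpha-1)2^{2\alpha-1}}\right)^{1/2}$, where $I_0$ is the modified Bessel function of the first kind. -/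
open scoped BigOperators
open intervalIntegral

/-- The one-dimensional anchored reproducing kernel `K_α` of smoothness `α ≥ 1` on
`[-1/2, 1/2]`, anchored at `0`, with the convention `(x-t)_+^0 = 𝟙_{x>t}`. -/
noncomputable def anchoredKernel (α : ℕ) (x y : ℝ) : ℝ :=
  if 0 < x ∧ 0 < y then
    (∑ r ∈ Finset.Icc 1 (α - 1), x ^ r * y ^ r / ((r.factorial : ℝ)) ^ 2)
      + ∫ t in (0:ℝ)..(1/2),
          (if t < x then (x - t) ^ (α - 1) else 0) *
            (if t < y then (y - t) ^ (α - 1) else 0) / (((α - 1).factorial : ℝ)) ^ 2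
  else if x < 0 ∧ y < 0 then
    (∑ r ∈ Finset.Icc 1 (α - 1), x ^ r * y ^ r / ((r.factorial : ℝ)) ^ 2)
      + ∫ t in (-(1/2):ℝ)..0,
          (if x < t then (t - x) ^ (α - 1) else 0) *
            (if y < t then (t - y) ^ (α - 1) else 0) / (((α - 1).factorial : ℝ)) ^ 2
  else 0

/-
For `|y| ≤ 1/2` the diagonal `K_α(y, y)` is at most the quantity `B` under the square root, so the
integral of `√K_α(y, y)` over an interval of length one is at most `√B`. By the symmetry
`K_α(-x, -y) = K_α(x, y)` it suffices to take `0 < y ≤ 1/2`. Then the polynomial part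
`∑_{r=1}^{α-1} y^{2r}/(r!)²` is dominated termwise by `I₀(1) - 1 = ∑_{r ≥ 1} (1/4)^r/(r!)²`,
and the integral part `∫_0^y (y - t)^{2α-2} dt / ((α-1)!)²` by
`∫_0^{1/2} (1/2 - t)^{2α-2} dt / ((α-1)!)² = 1/(((α-1)!)² (2α-1) 2^{2α-1})`.
-/

theorem anchoredKernel_neg (α : ℕ) (x y : ℝ) :
    anchoredKernel α (-x) (-y) = anchoredKernel α x y := by
  have hpow (r : ℕ) : (-x) ^ r * (-y) ^ r = x ^ r * y ^ r := by
    rw [← mul_pow, neg_mul_neg, mul_pow]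
  have hreflect (f : ℝ → ℝ) : ∫ t in -(1 / 2 : ℝ)..0, f t = ∫ t in (0 : ℝ)..1 / 2, f (-t) := by
    rw [integral_comp_neg, neg_zero]
  unfold anchoredKernel
  simp only [neg_pos, neg_lt_zero, hpow, hreflect]
  by_cases hpos : 0 < x ∧ 0 < y
  · have hneg : ¬(x < 0 ∧ y < 0) := fun h => h.1.not_gt hpos.1
    simp only [hpos, hneg, if_false, neg_lt_neg_iff, neg_sub_neg]
  · by_cases hneg : x < 0 ∧ y < 0
    · simp only [hpos, hneg, if_false, lt_neg, neg_sub_comm]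
    · simp only [hpos, hneg, if_false]

theorem summable_one_div_two_pow_succ_mul_factorial_succ_sq :
    Summable fun r : ℕ => 1 / ((2 ^ (r + 1) * ((r + 1).factorial : ℝ)) ^ 2) := by
  have hgeom : Summable fun r : ℕ => (1 / 4 : ℝ) ^ r :=
    summable_geometric_of_lt_one (by norm_num) (by norm_num)
  refine hgeom.of_nonneg_of_le (fun r => by positivity) fun r => ?_
  have h2r : (2 : ℝ) ^ r ≤ 2 ^ (r + 1) * ((r + 1).factorial : ℝ) :=
    calc (2 : ℝ) ^ r ≤ 2 ^ (r + 1) := pow_le_pow_right₀ one_le_two r.le_succ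
      _ ≤ _ := le_mul_of_one_le_right (by positivity) (Nat.one_le_cast.2 (Nat.factorial_pos _))
  calc 1 / ((2 ^ (r + 1) * ((r + 1).factorial : ℝ)) ^ 2) ≤ 1 / ((2 : ℝ) ^ r) ^ 2 :=
        one_div_le_one_div_of_le (by positivity) (pow_le_pow_left₀ (by positivity) h2r 2)
    _ = (1 / 4) ^ r := by rw [← pow_mul, mul_comm, pow_mul, one_div_pow]; norm_num

theorem sum_Icc_pow_mul_pow_div_factorial_sq_le (n : ℕ) {z : ℝ} (hz : |z| ≤ 1 / 2) :
    ∑ r ∈ Finset.Icc 1 n, z ^ r * z ^ r / ((r.factorial : ℝ)) ^ 2 ≤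
      ∑' r : ℕ, 1 / ((2 ^ (r + 1) * ((r + 1).factorial : ℝ)) ^ 2) := by
  have hz2 : z ^ 2 ≤ 1 / 4 := by
    nlinarith [sq_abs z, pow_le_pow_left₀ (abs_nonneg z) hz 2]
  rw [← Finset.Ico_add_one_right_eq_Icc, Finset.sum_Ico_eq_sum_range, Nat.add_sub_cancel]
  refine (Finset.sum_le_sum fun r _ => ?_).trans
    (summable_one_div_two_pow_succ_mul_factorial_succ_sq.sum_le_tsum _ fun _ _ => by positivity)
  rw [add_comm 1 r]
  calc z ^ (r + 1) * z ^ (r + 1) / (((r + 1).factorial : ℝ)) ^ 2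
      = (z ^ 2) ^ (r + 1) / (((r + 1).factorial : ℝ)) ^ 2 := by ring
    _ ≤ (1 / 4) ^ (r + 1) / (((r + 1).factorial : ℝ)) ^ 2 := by gcongr
    _ = 1 / ((2 ^ (r + 1) * ((r + 1).factorial : ℝ)) ^ 2) := by
        rw [mul_pow, ← pow_mul, mul_comm (r + 1), pow_mul, one_div_pow, div_div]; norm_num

theorem integral_ite_sub_pow_mul_ite_sub_pow_le (n : ℕ) {y b : ℝ} (hb : 0 ≤ b) (hyb : y ≤ b) :
    ∫ t in (0 : ℝ)..b, (if t < y then (y - t) ^ n else 0) * (if t < y then (y - t) ^ n else 0) ≤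
      b ^ (2 * n + 1) / (2 * n + 1) := by
  have hsq : ∀ t : ℝ, (if t < y then (y - t) ^ n else 0) * (if t < y then (y - t) ^ n else 0) =
      (Set.Iio y).indicator (fun t => (y - t) ^ (2 * n)) t := by
    intro t
    by_cases h : t < y <;> simp [h, ← pow_add, two_mul]
  have hcont (c : ℝ) : Continuous fun t : ℝ => (c - t) ^ (2 * n) := by fun_prop
  simp_rw [hsq]
  calc ∫ t in (0 : ℝ)..b, (Set.Iio y).indicator (fun t => (y - t) ^ (2 * n)) t
      ≤ ∫ t in (0 : ℝ)..b, (b - t) ^ (2 * n) := by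
        refine integral_mono_on hb ?_ ((hcont b).intervalIntegrable 0 b) fun t ht => ?_
        · exact intervalIntegrable_iff.2
            (((hcont y).intervalIntegrable 0 b).def'.indicator measurableSet_Iio)
        · by_cases h : t < y
          · simpa [h] using pow_le_pow_left₀ (sub_nonneg.2 h.le) (by linarith) (2 * n)
          · simpa [h] using pow_nonneg (sub_nonneg.2 ht.2) (2 * n)
    _ = b ^ (2 * n + 1) / (2 * n + 1) := by
        rw [integral_comp_sub_left fun t => t ^ (2 * n), integral_pow]
        push_cast
        ring

theorem anchoredKernel_diag_le_of_pos (n : ℕ) {y : ℝ} (hy₀ : 0 < y) (hy : y ≤ 1 / 2) :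
    anchoredKernel (n + 1) y y ≤
      (∑' r : ℕ, 1 / ((2 ^ (r + 1) * ((r + 1).factorial : ℝ)) ^ 2)) +
        1 / ((n.factorial : ℝ) ^ 2 * (2 * n + 1) * 2 ^ (2 * n + 1)) := by
  rw [anchoredKernel, if_pos ⟨hy₀, hy₀⟩, Nat.add_sub_cancel, integral_div]
  gcongr ?_ + ?_
  · exact sum_Icc_pow_mul_pow_div_factorial_sq_le n (abs_le.2 ⟨by linarith, hy⟩)
  · calc _ ≤ (1 / 2 : ℝ) ^ (2 * n + 1) / (2 * n + 1) / (n.factorial : ℝ) ^ 2 := by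
          gcongr
          exact integral_ite_sub_pow_mul_ite_sub_pow_le n (by norm_num) hy
      _ = _ := by rw [one_div_pow, div_div, div_div]; ring

theorem anchoredKernel_diag_le (n : ℕ) {y : ℝ} (hy : |y| ≤ 1 / 2) :
    anchoredKernel (n + 1) y y ≤
      (∑' r : ℕ, 1 / ((2 ^ (r + 1) * ((r + 1).factorial : ℝ)) ^ 2)) +
        1 / ((n.factorial : ℝ) ^ 2 * (2 * n + 1) * 2 ^ (2 * n + 1)) := by
  obtain ⟨hy₁, hy₂⟩ := abs_le.1 hy
  rcases lt_trichotomy y 0 with hneg | rfl | hpos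
  · rw [← anchoredKernel_neg]
    exact anchoredKernel_diag_le_of_pos n (neg_pos.2 hneg) (by linarith)
  · simp only [anchoredKernel, lt_irrefl, and_self, if_false]
    positivity
  · exact anchoredKernel_diag_le_of_pos n hpos hy₂

theorem integral_sqrt_le_sqrt_mul_of_le {f : ℝ → ℝ} {a b B : ℝ}
    (h : ∀ y ∈ Set.uIoc a b, f y ≤ B) : ∫ y in a..b, √(f y) ≤ √B * |b - a| :=
  (le_abs_self _).trans <| norm_integral_le_of_norm_le_const fun y hy =>
    (Real.norm_of_nonneg (Real.sqrt_nonneg _)).trans_le (Real.sqrt_le_sqrt (h y hy))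

/-- Bound on the integral of the square root of the diagonal of the anchored kernel:
`∫_{-1/2}^{1/2} K_α(y,y)^{1/2} dy ≤ (I₀(1) - 1 + 1/((α-1)!² (2α-1) 2^{2α-1}))^{1/2}`,
where `I₀` is the modified Bessel function of the first kind, so that
`I₀(1) - 1 = ∑_{r ≥ 1} 1/(2^r r!)²`. -/
theorem anchoredKernel_sqrt_diag_integral_le (α : ℕ) (hα : 1 ≤ α) :
    (∫ y in (-(1/2):ℝ)..(1/2), Real.sqrt (anchoredKernel α y y)) ≤
      Real.sqrt ((∑' r : ℕ, 1 / ((2 ^ (r+1) * ((r+1).factorial : ℝ)) ^ 2))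
        + 1 / ((((α - 1).factorial : ℝ)) ^ 2 * ((2 * α - 1 : ℕ) : ℝ) * 2 ^ (2 * α - 1))) := by
  obtain ⟨n, rfl⟩ : ∃ n, α = n + 1 := ⟨α - 1, by omega⟩
  rw [Nat.add_sub_cancel, show 2 * (n + 1) - 1 = 2 * n + 1 by omega]
  push_cast
  refine (integral_sqrt_le_sqrt_mul_of_le fun y hy => anchoredKernel_diag_le n ?_).trans_eq
    (by norm_num)
  rw [Set.uIoc_of_le (by norm_num)] at hy
  exact abs_le.2 ⟨hy.1.le, hy.2⟩
end

section
/- Parametric regularity (inductive bound): under the assumptions that $a(x,y) = a_0(x) + \sum_j y_j\phi_j(x)$ is uniformly elliptic with $\kappa = \|(\sum_j|\phi_j|/b_j)/(2a_0)\|_{L^\infty} < 1$ and $0 < b_j \leq 1$, for every integer $\alpha \geq 1$, every $k \geq 0$ and every $y \in [-1/2,1/2]^{\mathbb{N}}$: $\sum_{|\nu|=k,\,\nu_j\leq\alpha} b^{-2\nu}\|(\partial_y^\nu u)(\cdot,y)\|_V^2 \leq \left(\frac{2\alpha\kappa}{1-\kappa}\right)^{2k}\frac{\|f\|_{V^*}^2}{(1-\kappa)^2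 a_{0,\min}^2}$, where $b^{\nu} = \prod_j b_j^{\nu_j}$. -/
/-!
Test the Leibniz recursion for `∂^ν u` and apply Young's inequality to each term with weight
`λ b_j`, where `λ = 2ακ/(1-κ)`. The `κ`-condition gives
`∑_j b_j⁻¹ ∫ |φ_j| |∇v|² ≤ 2κ/(1-κ) ‖v‖²_{V,a}`, so the terms in `∂^ν u` can be absorbed, leaving
`‖∂^ν u‖²_{V,a} ≤ αλ ∑_j b_j ∫ |φ_j| |∇∂^{ν-e_j} u|²`. Divide by `b^{2ν}`, sum over `|ν| = k+1`
and reindex by `σ = ν - e_j` (injective for fixed `j`); the `κ`-condition applied once more then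
costs a factor `λ²` per level. The bound in `V` follows from `a ≥ (1-κ) a_{0,min}`.
-/

open MeasureTheory Finset Finsupp
open scoped RealInnerProductSpace

section

variable {ι : Type*}

namespace Finsupp

lemma sub_single_one_add_single {ν : ι →₀ ℕ} {j : ι} (hj : j ∈ ν.support) :
    ν - single j 1 + single j 1 = ν :=
  tsub_add_cancel_of_le (single_le_iff.mpr (Nat.one_le_iff_ne_zero.mpr (mem_support_iff.mp hj)))

lemma degree_sub_single_one_add_one {ν : ι →₀ ℕ} {j : ι} (hj : j ∈ ν.support) :
    degree (ν - single j 1) + 1 = degree ν := by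
  conv_rhs => rw [← sub_single_one_add_single hj]
  rw [map_add, degree_single]

lemma eq_of_sub_single_one_eq {ν ν' : ι →₀ ℕ} {j : ι} (hj : j ∈ ν.support)
    (hj' : j ∈ ν'.support) (h : ν - single j 1 = ν' - single j 1) : ν = ν' := by
  rw [← sub_single_one_add_single hj, ← sub_single_one_add_single hj', h]

def multiPow {M : Type*} [CommMonoid M] (b : ι → M) (ν : ι →₀ ℕ) : M :=
  ν.prod fun j m => b j ^ m

lemma multiPow_eq_multiPow_sub_single_mul {M : Type*} [CommMonoid M] (b : ι → M)
    {ν : ι →₀ ℕ} {j : ι} (hj : j ∈ ν.support) :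
    multiPow b ν = multiPow b (ν - single j 1) * b j := by
  conv_lhs => rw [multiPow, ← sub_single_one_add_single hj]
  rw [prod_add_index' (fun _ => pow_zero _) (fun _ _ _ => pow_add _ _ _), multiPow]
  simp only [prod_single_index, pow_zero, pow_one]

lemma prod_support_pow_two_mul {M : Type*} [CommMonoid M] (b : ι → M) (ν : ι →₀ ℕ) :
    ∏ j ∈ ν.support, b j ^ (2 * ν j) = multiPow b ν ^ 2 := by
  simp only [multiPow, Finsupp.prod, ← Finset.prod_pow, ← pow_mul, mul_comm]

lemma inv_multiPow_sq_mul_sum {K : Type*} [Field K] {b : ι → K} (hb : ∀ j, b j ≠ 0)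
    (ν : ι →₀ ℕ) (A : ι → K) :
    (multiPow b ν ^ 2)⁻¹ * ∑ j ∈ ν.support, b j * A j =
      ∑ j ∈ ν.support, (multiPow b (ν - single j 1) ^ 2)⁻¹ * ((b j)⁻¹ * A j) := by
  rw [Finset.mul_sum]
  refine Finset.sum_congr rfl fun j hj => ?_
  have := hb j
  rw [multiPow_eq_multiPow_sub_single_mul b hj]
  field_simp

end Finsupp

lemma sum_sum_sub_single_le [DecidableEq ι] {F : (ι →₀ ℕ) → ι → ℝ} (hF : ∀ σ j, 0 ≤ F σ j)
    (S : Finset (ι →₀ ℕ)) :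
    ∑ ν ∈ S, ∑ j ∈ ν.support, F (ν - single j 1) j ≤
      ∑ σ ∈ S.biUnion (fun ν => ν.support.image fun j => ν - single j 1),
        ∑ j ∈ S.biUnion support, F σ j := by
  let pred : (_ : ι →₀ ℕ) × ι → (ι →₀ ℕ) × ι := fun p => (p.1 - single p.2 1, p.2)
  have hinj : Set.InjOn pred (S.sigma support) := by
    rintro ⟨ν, j⟩ hp ⟨ν', j'⟩ hq h
    simp only [pred, Prod.mk.injEq] at h
    obtain ⟨h, rfl⟩ := h
    simp only [coe_sigma, Set.mem_sigma_iff, mem_coe] at hp hq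
    rw [eq_of_sub_single_one_eq hp.2 hq.2 h]
  rw [sum_sigma', ← sum_image (f := fun q => F q.1 q.2) hinj, ← sum_product']
  refine sum_le_sum_of_subset_of_nonneg ?_ fun q _ _ => hF q.1 q.2
  simp only [subset_iff, mem_image, mem_sigma, mem_product, mem_biUnion]
  rintro _ ⟨⟨ν, j⟩, ⟨hν, hj⟩, rfl⟩
  exact ⟨⟨ν, hν, j, hj, rfl⟩, ν, hν, hj⟩

theorem sum_le_pow_mul_of_le_sum_sub_single {e : (ι →₀ ℕ) → ℝ} {F : (ι →₀ ℕ) → ι → ℝ}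
    {P : (ι →₀ ℕ) → Prop} {c d B : ℝ} (hP : ∀ ν j, P ν → P (ν - single j 1))
    (hF : ∀ σ j, 0 ≤ F σ j) (hc : 0 ≤ c) (hd : 0 ≤ d) (hB : 0 ≤ B)
    (hsum : ∀ σ (J : Finset ι), ∑ j ∈ J, F σ j ≤ c * e σ)
    (hstep : ∀ ν, ν ≠ 0 → P ν → e ν ≤ d * ∑ j ∈ ν.support, F (ν - single j 1) j)
    (h0 : e 0 ≤ B) (k : ℕ) (S : Finset (ι →₀ ℕ)) (hS : ∀ ν ∈ S, degree ν = k ∧ P ν) :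
    ∑ ν ∈ S, e ν ≤ (d * c) ^ k * B := by
  classical
  induction k generalizing S with
  | zero =>
    have hS0 : S ⊆ {0} := fun ν hν => mem_singleton.mpr ((degree_eq_zero_iff ν).mp (hS ν hν).1)
    rcases subset_singleton_iff.mp hS0 with rfl | rfl
    · simpa using hB
    · simpa using h0
  | succ k ih =>
    set S' := S.biUnion fun ν => ν.support.image fun j => ν - single j 1
    have hS' : ∀ σ ∈ S', degree σ = k ∧ P σ := by
      simp only [S', mem_biUnion, mem_image]
      rintro _ ⟨ν, hν, j, hj, rfl⟩
      have := degree_sub_single_one_add_one hj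
      have := (hS ν hν).1
      exact ⟨by omega, hP ν j (hS ν hν).2⟩
    calc ∑ ν ∈ S, e ν
        ≤ ∑ ν ∈ S, d * ∑ j ∈ ν.support, F (ν - single j 1) j := by
          refine sum_le_sum fun ν hν => hstep ν ?_ (hS ν hν).2
          rintro rfl
          simpa using (hS 0 hν).1
      _ ≤ d * ∑ σ ∈ S', ∑ j ∈ S.biUnion support, F σ j := by
          rw [← Finset.mul_sum]
          exact mul_le_mul_of_nonneg_left (sum_sum_sub_single_le hF S) hd
      _ ≤ d * ∑ σ ∈ S', c * e σ :=
          mul_le_mul_of_nonneg_left (sum_le_sum fun σ _ => hsum σ _) hd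
      _ = d * c * ∑ σ ∈ S', e σ := by rw [← Finset.mul_sum, mul_assoc]
      _ ≤ d * c * ((d * c) ^ k * B) := mul_le_mul_of_nonneg_left (ih S' hS') (by positivity)
      _ = (d * c) ^ (k + 1) * B := by ring

lemma mul_le_div_two_mul_sq_add_inv_mul_sq {t : ℝ} (ht : 0 < t) (x y : ℝ) :
    x * y ≤ t / 2 * x ^ 2 + (2 * t)⁻¹ * y ^ 2 := by
  have key : 0 ≤ (t * x - y) ^ 2 / (2 * t) := by positivity
  have expand : (t * x - y) ^ 2 / (2 * t) = t / 2 * x ^ 2 + (2 * t)⁻¹ * y ^ 2 - x * y := by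
    field_simp
    ring
  linarith

section Integrals

variable {X E : Type*} [MeasurableSpace X] {μ : Measure X}
  [NormedAddCommGroup E] [InnerProductSpace ℝ E]

lemma neg_integral_mul_inner_le {φ : X → ℝ} {u v : X → E} {t : ℝ} (ht : 0 < t)
    (hu : Integrable (fun x => |φ x| * ‖u x‖ ^ 2) μ)
    (hv : Integrable (fun x => |φ x| * ‖v x‖ ^ 2) μ) :
    -∫ x, φ x * ⟪u x, v x⟫ ∂μ ≤
      t / 2 * ∫ x, |φ x| * ‖u x‖ ^ 2 ∂μ + (2 * t)⁻¹ * ∫ x, |φ x| * ‖v x‖ ^ 2 ∂μ := by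
  have hpt : ∀ x, ‖φ x * ⟪u x, v x⟫‖ ≤
      t / 2 * (|φ x| * ‖u x‖ ^ 2) + (2 * t)⁻¹ * (|φ x| * ‖v x‖ ^ 2) := fun x => calc
    ‖φ x * ⟪u x, v x⟫‖ ≤ |φ x| * (‖u x‖ * ‖v x‖) := by
      rw [norm_mul, Real.norm_eq_abs, Real.norm_eq_abs]
      exact mul_le_mul_of_nonneg_left (abs_real_inner_le_norm _ _) (abs_nonneg _)
    _ ≤ |φ x| * (t / 2 * ‖u x‖ ^ 2 + (2 * t)⁻¹ * ‖v x‖ ^ 2) :=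
      mul_le_mul_of_nonneg_left (mul_le_div_two_mul_sq_add_inv_mul_sq ht _ _) (abs_nonneg _)
    _ = _ := by ring
  calc -∫ x, φ x * ⟪u x, v x⟫ ∂μ ≤ ‖∫ x, φ x * ⟪u x, v x⟫ ∂μ‖ := neg_le_abs _
    _ ≤ ∫ x, t / 2 * (|φ x| * ‖u x‖ ^ 2) + (2 * t)⁻¹ * (|φ x| * ‖v x‖ ^ 2) ∂μ :=
      norm_integral_le_of_norm_le ((hu.const_mul _).add (hv.const_mul _))
        (.of_forall hpt)
    _ = _ := by rw [integral_add (hu.const_mul _) (hv.const_mul _), integral_const_mul,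
      integral_const_mul]

lemma sum_inv_mul_integral_le {φ : ι → X → ℝ} {b : ι → ℝ} {a h : X → ℝ} {c : ℝ}
    (hb : ∀ j, 0 ≤ b j) (hh : ∀ x, 0 ≤ h x)
    (hφ : ∀ᵐ x ∂μ, Summable (fun j => |φ j x| / b j) ∧ ∑' j, |φ j x| / b j ≤ c * a x)
    (hφh : ∀ j, Integrable (fun x => |φ j x| * h x) μ) (hah : Integrable (fun x => a x * h x) μ)
    (J : Finset ι) :
    ∑ j ∈ J, (b j)⁻¹ * ∫ x, |φ j x| * h x ∂μ ≤ c * ∫ x, a x * h x ∂μ := by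
  simp only [← integral_const_mul]
  rw [← integral_finsetSum J fun j _ => (hφh j).const_mul _]
  refine integral_mono_ae (integrable_finsetSum J fun j _ => (hφh j).const_mul _)
    (hah.const_mul _) ?_
  filter_upwards [hφ] with x ⟨hsum, hle⟩
  calc ∑ j ∈ J, (b j)⁻¹ * (|φ j x| * h x) = (∑ j ∈ J, |φ j x| / b j) * h x := by
        rw [Finset.sum_mul]
        exact sum_congr rfl fun j _ => by ring
    _ ≤ (c * a x) * h x := mul_le_mul_of_nonneg_right
        ((hsum.sum_le_tsum J fun j _ => div_nonneg (abs_nonneg _) (hb j)).trans hle) (hh x)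
    _ = c * (a x * h x) := mul_assoc _ _ _

lemma integral_le_inv_mul_integral_mul {a f : X → ℝ} {c : ℝ} (hc : 0 < c)
    (ha : ∀ᵐ x ∂μ, c ≤ a x) (hf : ∀ x, 0 ≤ f x) (hfi : Integrable f μ)
    (hafi : Integrable (fun x => a x * f x) μ) :
    ∫ x, f x ∂μ ≤ c⁻¹ * ∫ x, a x * f x ∂μ := by
  rw [le_inv_mul_iff₀ hc, ← integral_const_mul]
  refine integral_mono_ae (hfi.const_mul c) hafi ?_
  filter_upwards [ha] with x hx
  exact mul_le_mul_of_nonneg_right hx (hf x)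

lemma integral_mul_sq_norm_le_of_leibniz {a : X → ℝ} {φ : ι → X → ℝ} {b : ι → ℝ} {w : X → E}
    {u : ι → X → E} {n : ι → ℕ} {s : Finset ι} {c : ℝ} {α : ℕ} (hb : ∀ j, 0 < b j)
    (hc : 0 < c) (hα : 0 < α) (hn : ∀ j, n j ≤ α)
    (hu : ∀ j, Integrable (fun x => |φ j x| * ‖u j x‖ ^ 2) μ)
    (hw : ∀ j, Integrable (fun x => |φ j x| * ‖w x‖ ^ 2) μ)
    (hleib : ∫ x, a x * ‖w x‖ ^ 2 ∂μ = -∑ j ∈ s, (n j : ℝ) * ∫ x, φ j x * ⟪u j x, w x⟫ ∂μ)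
    (hcoeff : ∑ j ∈ s, (b j)⁻¹ * ∫ x, |φ j x| * ‖w x‖ ^ 2 ∂μ ≤ c * ∫ x, a x * ‖w x‖ ^ 2 ∂μ) :
    ∫ x, a x * ‖w x‖ ^ 2 ∂μ ≤
      α * (α * c) * ∑ j ∈ s, b j * ∫ x, |φ j x| * ‖u j x‖ ^ 2 ∂μ := by
  set l := (α : ℝ) * c with hl
  have hl0 : 0 < l := by positivity
  have hterm : ∀ j, -((n j : ℝ) * ∫ x, φ j x * ⟪u j x, w x⟫ ∂μ) ≤
      α * l / 2 * (b j * ∫ x, |φ j x| * ‖u j x‖ ^ 2 ∂μ) +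
        α / (2 * l) * ((b j)⁻¹ * ∫ x, |φ j x| * ‖w x‖ ^ 2 ∂μ) := fun j => by
    have hbj := hb j
    have hyoung := neg_integral_mul_inner_le (mul_pos hl0 hbj) (hu j) (hw j)
    have hrhs : 0 ≤ l * b j / 2 * ∫ x, |φ j x| * ‖u j x‖ ^ 2 ∂μ +
        (2 * (l * b j))⁻¹ * ∫ x, |φ j x| * ‖w x‖ ^ 2 ∂μ := by
      have := integral_nonneg (μ := μ) (f := fun x => |φ j x| * ‖u j x‖ ^ 2) fun x => by positivity
      have := integral_nonneg (μ := μ) (f := fun x => |φ j x| * ‖w x‖ ^ 2) fun x => by positivity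
      positivity
    calc -((n j : ℝ) * ∫ x, φ j x * ⟪u j x, w x⟫ ∂μ)
        = n j * -∫ x, φ j x * ⟪u j x, w x⟫ ∂μ := by ring
      _ ≤ α * (l * b j / 2 * ∫ x, |φ j x| * ‖u j x‖ ^ 2 ∂μ +
          (2 * (l * b j))⁻¹ * ∫ x, |φ j x| * ‖w x‖ ^ 2 ∂μ) :=
        (mul_le_mul_of_nonneg_left hyoung (Nat.cast_nonneg _)).trans
          (mul_le_mul_of_nonneg_right (by exact_mod_cast hn j) hrhs)
      _ = _ := by field_simp
  have hsum := sum_le_sum fun j (_ : j ∈ s) => hterm j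
  rw [sum_neg_distrib, ← hleib, sum_add_distrib, ← Finset.mul_sum, ← Finset.mul_sum] at hsum
  -- the `w`-halves of the Young bounds are absorbed into the left side
  have habsorb : α / (2 * l) * (c * ∫ x, a x * ‖w x‖ ^ 2 ∂μ) = (∫ x, a x * ‖w x‖ ^ 2 ∂μ) / 2 := by
    rw [hl]
    field_simp
  have := mul_le_mul_of_nonneg_left hcoeff (by positivity : (0 : ℝ) ≤ α / (2 * l))
  linarith

theorem sum_inv_multiPow_sq_mul_integral_le {g : (ι →₀ ℕ) → X → E} {a a₀ : X → ℝ}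
    {φ : ι → X → ℝ} {b : ι → ℝ} {κ B : ℝ} {α : ℕ} (hα : 0 < α) (hb : ∀ j, 0 < b j)
    (hκ : 0 < κ ∧ κ < 1)
    (hκdef : ∀ᵐ x ∂μ, Summable (fun j => |φ j x| / b j) ∧
      (∑' j, |φ j x| / b j) ≤ 2 * κ * a₀ x)
    (ha : ∀ᵐ x ∂μ, (1 - κ) * a₀ x ≤ a x)
    (hInt : ∀ ν : ι →₀ ℕ, Integrable (fun x => a x * ‖g ν x‖ ^ 2) μ)
    (hφInt : ∀ (j : ι) (ν : ι →₀ ℕ), Integrable (fun x => |φ j x| * ‖g ν x‖ ^ 2) μ)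
    (hLeibniz : ∀ ν : ι →₀ ℕ, ν ≠ 0 →
      (∫ x, a x * ‖g ν x‖ ^ 2 ∂μ) =
        -∑ j ∈ ν.support, (ν j : ℝ) *
          ∫ x, φ j x * ⟪g (ν - Finsupp.single j 1) x, g ν x⟫ ∂μ)
    (hbase : (∫ x, a x * ‖g 0 x‖ ^ 2 ∂μ) ≤ B) (hB : 0 ≤ B)
    (k : ℕ) (S : Finset (ι →₀ ℕ)) (hS : ∀ ν ∈ S, degree ν = k ∧ ∀ j, ν j ≤ α) :
    ∑ ν ∈ S, (multiPow b ν ^ 2)⁻¹ * ∫ x, a x * ‖g ν x‖ ^ 2 ∂μ ≤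
      (2 * α * κ / (1 - κ)) ^ (2 * k) * B := by
  obtain ⟨hκ0, hκ1⟩ := hκ
  set c := 2 * κ / (1 - κ) with hc_def
  have hc : 0 < c := div_pos (by positivity) (by linarith)
  have hcoeff : ∀ᵐ x ∂μ, Summable (fun j => |φ j x| / b j) ∧ ∑' j, |φ j x| / b j ≤ c * a x := by
    filter_upwards [hκdef, ha] with x ⟨hsum, hle⟩ hax
    refine ⟨hsum, hle.trans ?_⟩
    rw [hc_def, div_mul_eq_mul_div, le_div_iff₀ (by linarith)]
    nlinarith
  have hκsum : ∀ σ (J : Finset ι), ∑ j ∈ J, (b j)⁻¹ * ∫ x, |φ j x| * ‖g σ x‖ ^ 2 ∂μ ≤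
      c * ∫ x, a x * ‖g σ x‖ ^ 2 ∂μ := fun σ =>
    sum_inv_mul_integral_le (fun j => (hb j).le) (fun x => by positivity) hcoeff
      (fun j => hφInt j σ) (hInt σ)
  have key := sum_le_pow_mul_of_le_sum_sub_single (P := fun ν => ∀ j, ν j ≤ α)
    (e := fun ν => (multiPow b ν ^ 2)⁻¹ * ∫ x, a x * ‖g ν x‖ ^ 2 ∂μ)
    (F := fun σ j => (multiPow b σ ^ 2)⁻¹ * ((b j)⁻¹ * ∫ x, |φ j x| * ‖g σ x‖ ^ 2 ∂μ))
    (d := α * (α * c))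
    (fun ν j hν i => (tsub_le_self (a := ν) (b := single j 1) i).trans (hν i))
    (fun σ j => mul_nonneg (by positivity) (mul_nonneg (inv_nonneg.mpr (hb j).le)
      (integral_nonneg fun x => by positivity)))
    hc.le (by positivity) hB
    (fun σ J => by
      rw [← Finset.mul_sum, mul_left_comm]
      exact mul_le_mul_of_nonneg_left (hκsum σ J) (by positivity))
    (fun ν hν hνα => calc
      _ ≤ (multiPow b ν ^ 2)⁻¹ *
          (α * (α * c) * ∑ j ∈ ν.support, b j * ∫ x, |φ j x| * ‖g (ν - single j 1) x‖ ^ 2 ∂μ) :=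
        mul_le_mul_of_nonneg_left (integral_mul_sq_norm_le_of_leibniz hb hc hα hνα
          (fun j => hφInt j _) (fun j => hφInt j ν) (hLeibniz ν hν) (hκsum ν ν.support))
          (by positivity)
      _ = _ := by rw [mul_left_comm, inv_multiPow_sq_mul_sum fun j => (hb j).ne'])
    (by simpa [multiPow] using hbase) k S hS
  convert key using 2
  rw [pow_mul, hc_def]
  ring

end Integrals

end

/-- Parametric regularity of the PDE solution (inductive bound). For a fixed parameter
`y ∈ [-1/2,1/2]^ℕ`, `g ν : D → E` represents the gradient `∇(∂_y^ν u)(·, y)` of the mixed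
parametric derivative of the solution, so that `‖∂_y^ν u‖_V² = ∫_D ‖g ν‖²` and
`‖∂_y^ν u‖_{V,a}² = ∫_D a ‖g ν‖²`. Assuming the ellipticity conditions
`0 < a₀min ≤ a₀`, `(1-κ) a₀ ≤ a(·,y)`, `∑_j |φ_j|/b_j ≤ 2κ a₀` (i.e. the `L^∞` condition
defining `κ`), `0 < b_j ≤ 1`, `κ < 1`, the Leibniz recursion
`‖∂^ν u‖_{V,a}² = -∑_{j ∈ supp ν} ν_j ∫_D φ_j ∇(∂^{ν-e_j} u)·∇(∂^ν u)` and the a priori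
base bound `‖u‖_{V,a}² ≤ ‖f‖_{V*}²/((1-κ) a₀min)`, one has for every `k ≥ 0` and
integer `α ≥ 1`:
`∑_{|ν|=k, ν_j ≤ α} b^{-2ν} ‖∂^ν u‖_V² ≤ (2ακ/(1-κ))^{2k} ‖f‖_{V*}²/((1-κ)² a₀min²)`. -/
theorem parametric_regularity_inductive_bound
    {X : Type*} [MeasurableSpace X] (μ : Measure X)
    {E : Type*} [NormedAddCommGroup E] [InnerProductSpace ℝ E]
    (g : (ℕ →₀ ℕ) → X → E) (a a₀ : X → ℝ) (φ : ℕ → X → ℝ)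
    (b : ℕ → ℝ) (κ a₀min Cf : ℝ) (α : ℕ) (hα : 1 ≤ α)
    (hb : ∀ j, 0 < b j ∧ b j ≤ 1) (hκ : 0 < κ ∧ κ < 1)
    (ha₀min : 0 < a₀min)
    (ha₀ : ∀ᵐ x ∂μ, a₀min ≤ a₀ x)
    (hκdef : ∀ᵐ x ∂μ, Summable (fun j => |φ j x| / b j) ∧
      (∑' j, |φ j x| / b j) ≤ 2 * κ * a₀ x)
    (ha : ∀ᵐ x ∂μ, (1 - κ) * a₀ x ≤ a x)
    (hInt : ∀ ν : ℕ →₀ ℕ, Integrable (fun x => a x * ‖g ν x‖ ^ 2) μ)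
    (hInt' : ∀ ν : ℕ →₀ ℕ, Integrable (fun x => ‖g ν x‖ ^ 2) μ)
    (hInt'' : ∀ (j : ℕ) (ν : ℕ →₀ ℕ), Integrable (fun x => |φ j x| * ‖g ν x‖ ^ 2) μ)
    (hLeibniz : ∀ ν : ℕ →₀ ℕ, ν ≠ 0 →
      (∫ x, a x * ‖g ν x‖ ^ 2 ∂μ) =
        -∑ j ∈ ν.support, (ν j : ℝ) *
          ∫ x, φ j x * ⟪g (ν - Finsupp.single j 1) x, g ν x⟫ ∂μ)
    (hbase : (∫ x, a x * ‖g 0 x‖ ^ 2 ∂μ) ≤ Cf ^ 2 / ((1 - κ) * a₀min))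
    (k : ℕ) :
    (∑' ν : {ν : ℕ →₀ ℕ // (ν.sum fun _ m => m) = k ∧ ∀ j, ν j ≤ α},
        (∏ j ∈ ν.1.support, b j ^ (2 * ν.1 j))⁻¹ * ∫ x, ‖g ν.1 x‖ ^ 2 ∂μ)
      ≤ (2 * (α : ℝ) * κ / (1 - κ)) ^ (2 * k) *
          (Cf ^ 2 / ((1 - κ) ^ 2 * a₀min ^ 2)) := by
  have hK : 0 < (1 - κ) * a₀min := mul_pos (by linarith [hκ.2]) ha₀min
  have hcoercive : ∀ ν, ∫ x, ‖g ν x‖ ^ 2 ∂μ ≤ ((1 - κ) * a₀min)⁻¹ * ∫ x, a x * ‖g ν x‖ ^ 2 ∂μ :=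
    fun ν => integral_le_inv_mul_integral_mul hK
      (by filter_upwards [ha₀, ha] with x h₀ h; nlinarith [hκ.2]) (fun x => by positivity)
      (hInt' ν) (hInt ν)
  refine tsum_le_of_sum_le' (mul_nonneg (by rw [pow_mul]; positivity) (by positivity)) fun u => ?_
  have henergy := sum_inv_multiPow_sq_mul_integral_le hα (fun j => (hb j).1) hκ hκdef ha
    hInt hInt'' hLeibniz hbase (by positivity) k (u.map (.subtype _)) fun _ hν => by
      obtain ⟨ν, -, rfl⟩ := mem_map.mp hν
      exact ν.2
  rw [sum_map] at henergy
  calc _ ≤ ∑ ν ∈ u, ((1 - κ) * a₀min)⁻¹ *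
        ((multiPow b ν.1 ^ 2)⁻¹ * ∫ x, a x * ‖g ν.1 x‖ ^ 2 ∂μ) :=
        sum_le_sum fun ν _ => by
          rw [prod_support_pow_two_mul, mul_left_comm]
          exact mul_le_mul_of_nonneg_left (hcoercive ν) (by positivity)
    _ ≤ ((1 - κ) * a₀min)⁻¹ * ((2 * α * κ / (1 - κ)) ^ (2 * k) * (Cf ^ 2 / ((1 - κ) * a₀min))) := by
        rw [← Finset.mul_sum]
        exact mul_le_mul_of_nonneg_left henergy (by positivity)
    _ = _ := by field_simp
end

section
/- Lagrange-multiplier cost bound for MDM sample sizes: let $\lambda > 0$, $q \geq 1$, and for each $\mathfrak{u}$ in a finite index set $U$ let $c_\mathfrak{u} > 0$ (error constants) and $\pounds_\mathfrak{u} > 0$ (costs). Define $n_\mathfrak{u} = \lceil k_\mathfrak{u}\rceil$ with $k_\mathfrak{u} = (2/\epsilon)^{1/\lambda}\,T^{1/(q\lambda)}\,(c_\mathfrak{u}^q/\pounds_\mathfrak{u})^{1/(q\lambda+1)}$ where $T := \sum_{\mathfrak{v}\in U} \pounds_\mathfrak{v}^{q\lambda/(q\lambda+1)} c_\mathfrak{v}^{q/(q\lambda+1)}$.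 Then $\left(\sum_{\mathfrak{u}\in U} c_\mathfrak{u}^q / n_\mathfrak{u}^{q\lambda}\right)^{1/q} \leq \epsilon/2$, and $\sum_{\mathfrak{u}\in U} k_\mathfrak{u}\pounds_\mathfrak{u} = (2/\epsilon)^{1/\lambda}\, T^{(q\lambda+1)/(q\lambda)}$. -/
/-!
Put `A = qλ`, `w_𝔲 = £_𝔲^{A/(A+1)} c_𝔲^{q/(A+1)}` (so `T = ∑ w_𝔲`) and
`M = (2/ε)^{1/λ} T^{1/A}`, so that `k_𝔲 = M (c_𝔲^q/£_𝔲)^{1/(A+1)}`. Termwise,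
`k_𝔲 £_𝔲 = M w_𝔲` and `c_𝔲^q / k_𝔲^A = w_𝔲 / M^A`, while `M^A = (2/ε)^q T`. Summing gives
the cost `M T` and the constraint value `T / M^A = (ε/2)^q`; rounding `k_𝔲` up to `n_𝔲` only
decreases each term of the constraint.
-/

open Real Finset

noncomputable def lagrangeWeight (q A c L : ℝ) : ℝ := L ^ (A / (A + 1)) * c ^ (q / (A + 1))

section Termwise

variable {q A c L : ℝ}

lemma lagrangeWeight_pos (hc : 0 < c) (hL : 0 < L) : 0 < lagrangeWeight q A c L := by
  unfold lagrangeWeight; positivity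

lemma rpow_inv_succ_mul_self (hc : 0 ≤ c) (hL : 0 < L) (hA : A + 1 ≠ 0) :
    (c ^ q / L) ^ (1 / (A + 1)) * L = lagrangeWeight q A c L := by
  have hexp : A / (A + 1) = 1 - 1 / (A + 1) := by field_simp; ring
  rw [lagrangeWeight, div_rpow (by positivity) hL.le, ← rpow_mul hc, hexp, rpow_sub hL, rpow_one,
    mul_one_div]
  field_simp

lemma div_mul_rpow_inv_succ_rpow {M : ℝ} (hM : 0 ≤ M) (hc : 0 < c) (hL : 0 ≤ L)
    (hA : A + 1 ≠ 0) :
    c ^ q / (M * (c ^ q / L) ^ (1 / (A + 1))) ^ A = lagrangeWeight q A c L / M ^ A := by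
  have hexp : q - q * (1 / (A + 1)) * A = q / (A + 1) := by field_simp; ring
  rw [mul_rpow hM (by positivity), div_mul_eq_div_div_swap, lagrangeWeight,
    div_rpow (by positivity) hL, ← rpow_mul (by positivity),
    div_rpow (by positivity) (by positivity), ← rpow_mul hc.le, ← rpow_mul hL,
    div_div_eq_mul_div, mul_div_right_comm, ← rpow_sub hc, hexp, one_div_mul_eq_div, mul_comm]

end Termwise

lemma rpow_mul_rpow_inv_mul_rpow {a T q lam : ℝ} (ha : 0 ≤ a) (hT : 0 ≤ T) (hq : q ≠ 0)
    (hlam : lam ≠ 0) : (a ^ (1 / lam) * T ^ (1 / (q * lam))) ^ (q * lam) = a ^ q * T := by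
  rw [mul_rpow (by positivity) (by positivity), ← rpow_mul ha, ← rpow_mul hT]
  field_simp
  rw [rpow_one]

lemma rpow_inv_mul_self {T A : ℝ} (hT : 0 ≤ T) (hA : 0 < A) :
    T ^ (1 / A) * T = T ^ ((A + 1) / A) := by
  rw [add_div, div_self hA.ne', rpow_add' hT (by positivity), rpow_one, mul_comm]

lemma div_inv_mul_self_le {a : ℝ} (ha : 0 ≤ a) (T : ℝ) : T / (a⁻¹ * T) ≤ a := by
  rcases eq_or_ne T 0 with rfl | hT
  · simpa using ha
  · rw [div_mul_cancel_right₀ hT, inv_inv]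

lemma sum_div_rpow_natCeil_le {ι : Type*} [Fintype ι] {a k : ι → ℝ} {A : ℝ}
    (ha : ∀ i, 0 ≤ a i) (hA : 0 ≤ A) (hk : ∀ i, 0 < k i) :
    ∑ i, a i / (⌈k i⌉₊ : ℝ) ^ A ≤ ∑ i, a i / k i ^ A := by
  gcongr with i
  · exact ha i
  · exact rpow_pos_of_pos (hk i) A
  · exact (hk i).le
  · exact Nat.le_ceil _

/-- Lagrange-multiplier cost bound for the MDM sample sizes: with error constants
`c_𝔲 > 0`, costs `£_𝔲 > 0`, `T = ∑_𝔳 £_𝔳^{qλ/(qλ+1)} c_𝔳^{q/(qλ+1)}` and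
`n_𝔲 = ⌈k_𝔲⌉` where `k_𝔲 = (2/ε)^{1/λ} T^{1/(qλ)} (c_𝔲^q/£_𝔲)^{1/(qλ+1)}`, the error
constraint `(∑_𝔲 c_𝔲^q / n_𝔲^{qλ})^{1/q} ≤ ε/2` holds, and the (idealized) cost equals
`∑_𝔲 k_𝔲 £_𝔲 = (2/ε)^{1/λ} T^{(qλ+1)/(qλ)}`. -/
theorem mdm_lagrange_cost_bound
    {ι : Type*} [Fintype ι] (ε lam q : ℝ)
    (hε : 0 < ε) (hlam : 0 < lam) (hq : 1 ≤ q)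
    (c L : ι → ℝ) (hc : ∀ i, 0 < c i) (hL : ∀ i, 0 < L i)
    (T : ℝ) (hT : T = ∑ i, L i ^ (q * lam / (q * lam + 1)) * c i ^ (q / (q * lam + 1)))
    (k : ι → ℝ)
    (hk : ∀ i, k i = (2 / ε) ^ (1 / lam) * T ^ (1 / (q * lam)) *
      (c i ^ q / L i) ^ (1 / (q * lam + 1)))
    (n : ι → ℕ) (hn : ∀ i, n i = ⌈k i⌉₊) :
    (∑ i, c i ^ q / (n i : ℝ) ^ (q * lam)) ^ (1 / q) ≤ ε / 2 ∧
      ∑ i, k i * L i = (2 / ε) ^ (1 / lam) * T ^ ((q * lam + 1) / (q * lam)) := by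
  have hq0 : 0 < q := zero_lt_one.trans_le hq
  have hA : 0 < q * lam := mul_pos hq0 hlam
  have hA1 : q * lam + 1 ≠ 0 := by positivity
  have hw : ∀ i, 0 < lagrangeWeight q (q * lam) (c i) (L i) := fun i =>
    lagrangeWeight_pos (hc i) (hL i)
  replace hT : T = ∑ i, lagrangeWeight q (q * lam) (c i) (L i) := hT
  have hT0 : 0 ≤ T := hT ▸ sum_nonneg fun i _ => (hw i).le
  set M := (2 / ε) ^ (1 / lam) * T ^ (1 / (q * lam)) with hM
  have hM0 : 0 ≤ M := by positivity
  have hMpow : M ^ (q * lam) = ((ε / 2) ^ q)⁻¹ * T := by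
    rw [hM, rpow_mul_rpow_inv_mul_rpow (by positivity) hT0 hq0.ne' hlam.ne', ← inv_div,
      inv_rpow (by positivity)]
  have hkpos : ∀ i, 0 < k i := fun i => by
    have : 0 < T := (hw i).trans_le (hT ▸ single_le_sum (fun j _ => (hw j).le) (mem_univ i))
    have := hc i; have := hL i
    rw [hk]; positivity
  have hsum : ∑ i, c i ^ q / (n i : ℝ) ^ (q * lam) ≤ (ε / 2) ^ q := calc
    _ ≤ ∑ i, c i ^ q / k i ^ (q * lam) := by
      simp only [hn]
      exact sum_div_rpow_natCeil_le (fun i => (rpow_pos_of_pos (hc i) q).le) hA.le hkpos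
    _ = T / M ^ (q * lam) := by
      simp only [hk, div_mul_rpow_inv_succ_rpow hM0 (hc _) (hL _).le hA1, ← sum_div, hT]
    _ ≤ (ε / 2) ^ q := hMpow ▸ div_inv_mul_self_le (by positivity) T
  refine ⟨?_, ?_⟩
  · rw [one_div, rpow_inv_le_iff_of_pos (sum_nonneg fun i _ => ?_) (by positivity) hq0]
    · exact hsum
    · have := hc i; positivity
  · calc ∑ i, k i * L i = M * T := by
          simp only [hk, mul_assoc, rpow_inv_succ_mul_self (hc _).le (hL _) hA1, ← mul_sum, ← hT]
      _ = _ := by rw [hM, mul_assoc, rpow_inv_mul_self hT0 hA]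
end
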